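/- Let z : ℝ → ℂ be differentiable in a neighborhood of t₀ with z' differentiable at t₀, with z' continuous and nonvanishing in a neighborhood of t₀, and suppose z(s) ≠ z(t₀) for all s ≠ t₀ in some punctured neighborhood of t₀. Then the limit as s → t₀ (s ≠ t₀) of (1/(2πi)) · ( (z'(s)/|z'(s)|)/(z(t₀) − z(s)) − conj(z'(t₀)/|z'(t₀)|)/conj(z(t₀) − z(s)) ) equals 0. -/

import Mathlib

/-!
Write `h = s - t₀`, `D = z s - z t₀`, `c = z' t₀` and `T₀ = c / |c|`. Since `T₀ / (h c) = 1 / (h |c|)`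
is real, the kernel equals `-(T s - T₀) / D - (w - conj w)` with `w = T₀ (D⁻¹ - (h c)⁻¹)`.
The first quotient tends to `T'(t₀) / c`, and the second-order Taylor expansion of `z` gives
`w → -T₀ z''(t₀) / (2 c²)`. As `|T| = 1`, `T'(t₀) = T₀ · i Im (z''(t₀) / c)`, and the two limits
cancel.
-/

open Filter Topology Asymptotics Complex ComplexConjugate

theorem isLittleO_sub_taylor_two {E : Type*} [NormedAddCommGroup E] [NormedSpace ℝ E]
    {f : ℝ → E} {x₀ : ℝ} (hf : ∀ᶠ x in 𝓝 x₀, DifferentiableAt ℝ f x)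
    (hf' : DifferentiableAt ℝ (deriv f) x₀) :
    (fun x => f x - f x₀ - (x - x₀) • deriv f x₀ - ((x - x₀) ^ 2 / 2) • deriv (deriv f) x₀)
      =o[𝓝 x₀] fun x => (x - x₀) ^ 2 := by
  obtain ⟨δ, hδ, hball⟩ := Metric.eventually_nhds_iff_ball.1 hf
  have hnhds : 𝓝[Metric.ball x₀ δ] x₀ = 𝓝 x₀ := nhdsWithin_eq_nhds.2 (Metric.ball_mem_nhds x₀ hδ)
  have hderiv : ∀ x ∈ Metric.ball x₀ δ, HasDerivWithinAt
      (fun x => f x - (x - x₀) • deriv f x₀ - ((x - x₀) ^ 2 / 2) • deriv (deriv f) x₀)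
      (deriv f x - deriv f x₀ - (x - x₀) • deriv (deriv f) x₀) (Metric.ball x₀ δ) x := by
    intro x hx
    have := (((hball x hx).hasDerivAt.sub (((hasDerivAt_id x).sub_const x₀).smul_const
      (deriv f x₀))).sub ((((hasDerivAt_id x).sub_const x₀).pow 2).div_const 2 |>.smul_const
      (deriv (deriv f) x₀)))
    convert this.hasDerivWithinAt using 1
    · rfl
    · norm_num
  have hrem := (convex_ball x₀ δ).isLittleO_pow_succ_real (Metric.mem_ball_self hδ) hderiv
    (n := 1) (by simpa [hnhds] using hf'.hasDerivAt.isLittleO)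
  rw [hnhds] at hrem
  convert hrem using 2 with x
  simp
  abel

theorem HasDerivAt.complex_norm {u : ℝ → ℂ} {u' : ℂ} {t : ℝ} (hu : HasDerivAt u u' t)
    (h0 : u t ≠ 0) : HasDerivAt (fun s => ‖u s‖) (‖u t‖ * (u' / u t).re) t := by
  have hsq := hu.norm_sq.sqrt (by positivity)
  simp only [Real.sqrt_sq (norm_nonneg _)] at hsq
  convert hsq using 1
  have hn : ‖u t‖ ≠ 0 := norm_ne_zero_iff.2 h0
  rw [Complex.inner, div_re, Complex.normSq_eq_norm_sq, mul_re, conj_re, conj_im]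
  field_simp
  ring

theorem HasDerivAt.div_norm {u : ℝ → ℂ} {u' : ℂ} {t : ℝ} (hu : HasDerivAt u u' t)
    (h0 : u t ≠ 0) :
    HasDerivAt (fun s => u s / ‖u s‖) (u t / ‖u t‖ * (I * (u' / u t).im)) t := by
  have hn : (‖u t‖ : ℂ) ≠ 0 := ofReal_ne_zero.2 (norm_ne_zero_iff.2 h0)
  refine (hu.div (hu.complex_norm h0).ofReal_comp hn).congr_deriv ?_
  have hre := re_add_im (u' / u t)
  rw [eq_div_iff h0] at hre
  field_simp
  push_cast
  linear_combination (-(‖u t‖ : ℂ)) * hre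

theorem HasDerivAt.tendsto_sub_div_sub {𝕜 𝕜' : Type*} [NontriviallyNormedField 𝕜]
    [NormedField 𝕜'] [NormedAlgebra 𝕜 𝕜'] {f g : 𝕜 → 𝕜'} {f' g' : 𝕜'} {x : 𝕜}
    (hg : HasDerivAt g g' x) (hf : HasDerivAt f f' x) (hf' : f' ≠ 0) :
    Tendsto (fun y => (g y - g x) / (f y - f x)) (𝓝[≠] x) (𝓝 (g' / f')) := by
  have hslope := (hasDerivAt_iff_tendsto_slope.1 hg).div (hasDerivAt_iff_tendsto_slope.1 hf) hf'
  refine hslope.congr' ?_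
  filter_upwards [self_mem_nhdsWithin] with y hy
  have hy' : algebraMap 𝕜 𝕜' (y - x)⁻¹ ≠ 0 := by simpa [sub_eq_zero] using hy
  rw [Pi.div_apply, slope_def_module, slope_def_module, Algebra.smul_def, Algebra.smul_def,
    mul_div_mul_left _ _ hy']

theorem tendsto_inv_sub_sub_inv_smul_deriv {𝕜 : Type*} [NormedField 𝕜] [NormedAlgebra ℝ 𝕜]
    {f : ℝ → 𝕜} {x₀ : ℝ} (hf : ∀ᶠ x in 𝓝 x₀, DifferentiableAt ℝ f x)
    (hf' : DifferentiableAt ℝ (deriv f) x₀) (hf₀ : deriv f x₀ ≠ 0) :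
    Tendsto (fun x => (f x - f x₀)⁻¹ - ((x - x₀) • deriv f x₀)⁻¹) (𝓝[≠] x₀)
      (𝓝 (-deriv (deriv f) x₀ / (2 * deriv f x₀ ^ 2))) := by
  set c₁ := deriv f x₀
  set c₂ := deriv (deriv f) x₀
  have hslope : Tendsto (fun x => (x - x₀)⁻¹ • (f x - f x₀)) (𝓝[≠] x₀) (𝓝 c₁) :=
    hasDerivAt_iff_tendsto_slope.1 hf.self_of_nhds.hasDerivAt
  have hrem : Tendsto (fun x => ((x - x₀) ^ 2)⁻¹ • (f x - f x₀ - (x - x₀) • c₁)) (𝓝[≠] x₀)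
      (𝓝 (c₂ / 2)) := by
    have h := (tendsto_nhdsWithin_of_tendsto_nhds (s := {x₀}ᶜ)
      (isLittleO_sub_taylor_two hf hf').tendsto_inv_smul_nhds_zero).add_const (c₂ / 2)
    rw [zero_add] at h
    refine h.congr' ?_
    filter_upwards [self_mem_nhdsWithin] with x hx
    have hh : algebraMap ℝ 𝕜 (x - x₀) ≠ 0 := by simpa [sub_eq_zero] using hx
    simp only [Algebra.smul_def, map_inv₀, map_pow, map_div₀, map_ofNat]
    field_simp
    ring
  have hlim := (hrem.div (hslope.mul_const c₁) (mul_ne_zero hf₀ hf₀)).neg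
  simp only [Pi.div_apply] at hlim
  convert hlim.congr' ?_ using 2
  · field_simp
  filter_upwards [self_mem_nhdsWithin, hslope.eventually_ne hf₀] with x hx hq
  have hh : algebraMap ℝ 𝕜 (x - x₀) ≠ 0 := by simpa [sub_eq_zero] using hx
  have hD : f x - f x₀ ≠ 0 := by rintro h; simp [h] at hq
  simp only [Algebra.smul_def, map_inv₀, map_pow] at hq ⊢
  field_simp
  ring

theorem div_sub_conj_div_conj_eq (τ c a b : ℂ) (h : ℝ) (hc : c ≠ 0) :
    τ / (a - b) - conj (c / ‖c‖) / conj (a - b) =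
      -((τ - c / ‖c‖) / (b - a)) -
        (c / ‖c‖ * ((b - a)⁻¹ - (h • c)⁻¹) - conj (c / ‖c‖ * ((b - a)⁻¹ - (h • c)⁻¹))) := by
  have hreal : conj (c / ‖c‖ * (h • c)⁻¹) = c / ‖c‖ * (h • c)⁻¹ := by
    rw [conj_eq_iff_real]
    exact ⟨(‖c‖ * h)⁻¹, by rw [real_smul]; push_cast; field_simp⟩
  rw [mul_sub, map_sub (starRingEnd ℂ) (c / ‖c‖ * (b - a)⁻¹), hreal, ← neg_sub b a]
  simp only [map_neg, map_mul, map_inv₀, div_neg]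
  ring

theorem neg_div_sub_sub_conj_eq_zero (c d : ℂ) (hc : c ≠ 0) :
    -(c / ‖c‖ * (I * (d / c).im) / c) -
      (c / ‖c‖ * (-d / (2 * c ^ 2)) - conj (c / ‖c‖ * (-d / (2 * c ^ 2)))) = 0 := by
  have hn : (‖c‖ : ℂ) ≠ 0 := ofReal_ne_zero.2 (norm_ne_zero_iff.2 hc)
  have hw : c / ‖c‖ * (-d / (2 * c ^ 2)) = -(d / c) / ((2 * ‖c‖ : ℝ) : ℂ) := by
    push_cast
    field_simp
  rw [hw, sub_conj, div_ofReal_im, neg_im,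
    show c / ‖c‖ * (I * (d / c).im) / c = I * (d / c).im / ‖c‖ by field_simp]
  push_cast
  field_simp
  ring

theorem kerzman_stein_kernel_diagonal_zero_general
    (z : ℝ → ℂ) (t₀ : ℝ)
    (hz : ∀ᶠ t in nhds t₀, DifferentiableAt ℝ z t)
    (hz' : DifferentiableAt ℝ (deriv z) t₀)
    (hz'0 : ∀ᶠ t in nhds t₀, deriv z t ≠ 0) :
    Filter.Tendsto
      (fun s : ℝ => (1 / (2 * (Real.pi : ℂ) * Complex.I)) *
        ((deriv z s / (‖deriv z s‖ : ℂ)) / (z t₀ - z s)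
          - (starRingEnd ℂ) (deriv z t₀ / (‖deriv z t₀‖ : ℂ)) /
              (starRingEnd ℂ) (z t₀ - z s)))
      (nhdsWithin t₀ {t₀}ᶜ) (nhds 0) := by
  have hc : deriv z t₀ ≠ 0 := hz'0.self_of_nhds
  have hquot := (hz'.hasDerivAt.div_norm hc).tendsto_sub_div_sub hz.self_of_nhds.hasDerivAt hc
  have hinv := (tendsto_inv_sub_sub_inv_smul_deriv hz hz' hc).const_mul
    (deriv z t₀ / ‖deriv z t₀‖)
  have hlim := (hquot.neg.sub (hinv.sub ((continuous_conj.tendsto _).comp hinv))).const_mul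
    (1 / (2 * (Real.pi : ℂ) * I))
  rw [neg_div_sub_sub_conj_eq_zero _ _ hc, mul_zero] at hlim
  refine hlim.congr fun s => ?_
  rw [div_sub_conj_div_conj_eq _ _ _ _ (s - t₀) hc]
  rfl

/-- The Kerzman–Stein kernel extends continuously by `0` to the diagonal: as `s → t₀`
(`s ≠ t₀`), `(1/(2πi)) ( T(z(s))/(z(t₀)-z(s)) - conj(T(z(t₀)))/conj(z(t₀)-z(s)) )` tends to
`0`, where `T(z(t)) = z'(t)/|z'(t)|`. -/
theorem kerzman_stein_kernel_diagonal_zero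
    (z : ℝ → ℂ) (t₀ : ℝ)
    (hz : ∀ᶠ t in nhds t₀, DifferentiableAt ℝ z t)
    (hz' : DifferentiableAt ℝ (deriv z) t₀)
    (hz'cont : ∀ᶠ t in nhds t₀, ContinuousAt (deriv z) t)
    (hz'0 : ∀ᶠ t in nhds t₀, deriv z t ≠ 0)
    (hzz : ∀ᶠ s in nhdsWithin t₀ {t₀}ᶜ, z s ≠ z t₀) :
    Filter.Tendsto
      (fun s : ℝ => (1 / (2 * (Real.pi : ℂ) * Complex.I)) *
        ((deriv z s / (‖deriv z s‖ : ℂ)) / (z t₀ - z s)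
          - (starRingEnd ℂ) (deriv z t₀ / (‖deriv z t₀‖ : ℂ)) /
              (starRingEnd ℂ) (z t₀ - z s)))
      (nhdsWithin t₀ {t₀}ᶜ) (nhds 0) :=
  kerzman_stein_kernel_diagonal_zero_general z t₀ hz hz' hz'0
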